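/- arXiv:1009.2466 — 8 statements merged into one kernel-verified Lean document; each statement's English description precedes it below -/
import Mathlib

section
/- If f : ℝ → ℝ is 1-periodic, continuously differentiable, and has zero mean over [0,1], then the maximum of f² over [0,1] is at most (1/12) times the integral of (f')² over [0,1]. -/
/-!
Integrating by parts against the kernel `t - (x + 1/2)` on `[x, x + 1]` gives
`f x = ∫ t in x..x+1, (t - (x + 1/2)) f' t`: the boundary terms are `(f x + f (x + 1)) / 2 = f x`
by periodicity and the remaining `∫ f` vanishes because `f` has zero mean over any period.
Cauchy–Schwarz then bounds `f x ^ 2` by `∫ (t - (x + 1/2)) ^ 2 = 1/12` times `∫ f' ^ 2`.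
-/

open intervalIntegral MeasureTheory

theorem intervalIntegral.sq_integral_mul_le_integral_sq_mul_integral_sq
    {u v : ℝ → ℝ} {a b : ℝ} (hab : a ≤ b) (huv : IntervalIntegrable (fun x ↦ u x * v x) volume a b)
    (hu : IntervalIntegrable (fun x ↦ u x ^ 2) volume a b)
    (hv : IntervalIntegrable (fun x ↦ v x ^ 2) volume a b) :
    (∫ x in a..b, u x * v x) ^ 2 ≤ (∫ x in a..b, u x ^ 2) * ∫ x in a..b, v x ^ 2 := by
  have hquad : ∀ s : ℝ, 0 ≤ (∫ x in a..b, v x ^ 2) * (s * s)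
      + (-2 * ∫ x in a..b, u x * v x) * s + ∫ x in a..b, u x ^ 2 := by
    intro s
    have hexpand : ∫ x in a..b, (u x - s * v x) ^ 2
        = (∫ x in a..b, v x ^ 2) * (s * s) + (-2 * ∫ x in a..b, u x * v x) * s
          + ∫ x in a..b, u x ^ 2 := by
      have hsq (x : ℝ) :
          (u x - s * v x) ^ 2 = u x ^ 2 - 2 * s * (u x * v x) + s ^ 2 * v x ^ 2 := by
        ring
      simp_rw [hsq]
      rw [integral_add (hu.sub (huv.const_mul _)) (hv.const_mul _),
        integral_sub hu (huv.const_mul _), integral_const_mul, integral_const_mul]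
      ring
    exact hexpand ▸ integral_nonneg hab fun x _ ↦ sq_nonneg _
  have hdiscrim := discrim_le_zero hquad
  rw [discrim] at hdiscrim
  linarith

theorem intervalIntegral.integral_sub_midpoint_mul_deriv {f f' : ℝ → ℝ} {a b : ℝ}
    (hf : ∀ x ∈ Set.uIcc a b, HasDerivAt f (f' x) x) (hf' : IntervalIntegrable f' volume a b) :
    ∫ x in a..b, (x - (a + b) / 2) * f' x = (b - a) / 2 * (f a + f b) - ∫ x in a..b, f x := by
  rw [integral_mul_deriv_eq_deriv_mul (fun x _ ↦ (hasDerivAt_id' x).sub_const _) hf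
    intervalIntegrable_const hf']
  simp only [one_mul]
  ring

theorem intervalIntegral.integral_sub_midpoint_sq (a b : ℝ) :
    ∫ x in a..b, (x - (a + b) / 2) ^ 2 = (b - a) ^ 3 / 12 := by
  rw [integral_comp_sub_right (· ^ 2), integral_pow]
  ring

theorem Function.Periodic.deriv {f : ℝ → ℝ} {c : ℝ} (hf : Function.Periodic f c) :
    Function.Periodic (deriv f) c := fun x ↦ by
  rw [← deriv_comp_add_const, show (fun y ↦ f (y + c)) = f from funext hf]

theorem max_sq_le_twelfth_integral_deriv_sq
    (f : ℝ → ℝ) (hf : ContDiff ℝ 1 f) (hper : Function.Periodic f 1)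
    (hmean : ∫ x in (0:ℝ)..1, f x = 0) :
    ∀ x ∈ Set.Icc (0:ℝ) 1, (f x) ^ 2 ≤ (1 / 12) * ∫ y in (0:ℝ)..1, (deriv f y) ^ 2 := by
  intro x _
  have hf' : Continuous (deriv f) := hf.continuous_deriv le_rfl
  have hkernel : f x = ∫ t in x..x + 1, (t - (x + (x + 1)) / 2) * deriv f t := by
    rw [integral_sub_midpoint_mul_deriv
      (fun t _ ↦ (hf.differentiable one_ne_zero t).hasDerivAt) (hf'.intervalIntegrable _ _),
      hper x, hper.intervalIntegral_add_eq x 0, zero_add, hmean]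
    ring
  have hcont : Continuous fun t ↦ t - (x + (x + 1)) / 2 := by fun_prop
  calc f x ^ 2 = (∫ t in x..x + 1, (t - (x + (x + 1)) / 2) * deriv f t) ^ 2 := by rw [← hkernel]
    _ ≤ (∫ t in x..x + 1, (t - (x + (x + 1)) / 2) ^ 2) * ∫ t in x..x + 1, deriv f t ^ 2 :=
      sq_integral_mul_le_integral_sq_mul_integral_sq (by linarith)
        ((hcont.mul hf').intervalIntegrable _ _) ((hcont.pow 2).intervalIntegrable _ _)
        ((hf'.pow 2).intervalIntegrable _ _)
    _ = 1 / 12 * ∫ y in (0:ℝ)..1, deriv f y ^ 2 := by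
      have hshift := (hper.deriv.comp (· ^ 2)).intervalIntegral_add_eq x 0
      simp only [Function.comp_def, zero_add] at hshift
      rw [integral_sub_midpoint_sq, hshift]
      ring
end

section
/- For every 1-periodic C¹ function f : ℝ → ℝ with zero average over [0,1], the Wirtinger inequality ∫₀¹ f(x)² dx ≤ (1/(4π²)) ∫₀¹ f'(x)² dx holds. -/
/-! Integration by parts, whose boundary term vanishes because `f a = f b`, gives
`c_n(f) = (b - a) / (2πin) · c_n(f')` for the Fourier coefficients on `[a, b]` and `n ≠ 0`,
while `c_0(f)` is the mean of `f`, which is zero. Hence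
`‖c_n(f)‖ ≤ (b - a) / (2π) · ‖c_n(f')‖` for every `n`, and Parseval's identity sums these bounds
to the inequality between the `L²` norms. -/

open MeasureTheory Complex Real Set

theorem ContinuousOn.memLp_restrict {X E : Type*} [TopologicalSpace X] [MeasurableSpace X]
    [OpensMeasurableSpace X] [T2Space X] [NormedAddCommGroup E] {μ : Measure X}
    [IsFiniteMeasureOnCompacts μ] {f : X → E} {s : Set X} (hs : IsCompact s)
    (hf : ContinuousOn f s) (p : ENNReal) : MemLp f p (μ.restrict s) := by
  have : IsFiniteMeasure (μ.restrict s) := isFiniteMeasure_restrict.mpr hs.measure_lt_top.ne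
  obtain ⟨C, hC⟩ := hs.exists_bound_of_continuousOn hf
  exact .of_bound (hf.aestronglyMeasurable_of_isCompact hs hs.measurableSet) C
    ((ae_restrict_iff' hs.measurableSet).mpr (ae_of_all _ hC))

theorem fourierCoeffOn_zero {E : Type*} [NormedAddCommGroup E] [NormedSpace ℂ E]
    {a b : ℝ} (hab : a < b) (f : ℝ → E) :
    fourierCoeffOn hab f 0 = (1 / (b - a)) • ∫ x in a..b, f x := by
  simp [fourierCoeffOn_eq_integral]

theorem fourierCoeffOn_of_hasDerivAt_of_eq {a b : ℝ} (hab : a < b) {f f' : ℝ → ℂ} {n : ℤ}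
    (hn : n ≠ 0) (hf : ∀ x ∈ Icc a b, HasDerivAt f (f' x) x)
    (hf' : IntervalIntegrable f' volume a b) (hfab : f a = f b) :
    fourierCoeffOn hab f n = (b - a) / (2 * π * I * n) * fourierCoeffOn hab f' n := by
  rw [fourierCoeffOn_of_hasDerivAt hab hn (by rwa [uIcc_of_le hab.le]) hf', hfab, sub_self,
    mul_zero, zero_sub]
  have : (n : ℂ) ≠ 0 := Int.cast_ne_zero.mpr hn
  field_simp

theorem norm_fourierCoeffOn_of_hasDerivAt_of_eq_le {a b : ℝ} (hab : a < b) {f f' : ℝ → ℂ}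
    (hf : ∀ x ∈ Icc a b, HasDerivAt f (f' x) x) (hf' : IntervalIntegrable f' volume a b)
    (hfab : f a = f b) (hf0 : fourierCoeffOn hab f 0 = 0) (n : ℤ) :
    ‖fourierCoeffOn hab f n‖ ≤ (b - a) / (2 * π) * ‖fourierCoeffOn hab f' n‖ := by
  rcases eq_or_ne n 0 with rfl | hn
  · rw [hf0, norm_zero]
    have := sub_pos.mpr hab
    positivity
  have hn' : (1 : ℝ) ≤ |(n : ℝ)| := by exact_mod_cast Int.one_le_abs hn
  rw [fourierCoeffOn_of_hasDerivAt_of_eq hab hn hf hf' hfab, norm_mul, norm_div]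
  have hba : ‖(b : ℂ) - a‖ = b - a := by
    rw [← ofReal_sub, norm_real, Real.norm_of_nonneg (sub_pos.mpr hab).le]
  have h2πn : ‖2 * π * I * n‖ = 2 * π * |(n : ℝ)| := by
    simp [abs_of_pos pi_pos]
  rw [hba, h2πn]
  refine mul_le_mul_of_nonneg_right ?_ (norm_nonneg _)
  exact div_le_div_of_nonneg_left (sub_pos.mpr hab).le (by positivity)
    (le_mul_of_one_le_right (by positivity) hn')

theorem integral_norm_sq_le_of_hasDerivAt_of_eq {a b : ℝ} (hab : a < b) {f f' : ℝ → ℂ}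
    (hf : ∀ x ∈ Icc a b, HasDerivAt f (f' x) x) (hf' : MemLp f' 2 (volume.restrict (Ioc a b)))
    (hfab : f a = f b) (hmean : ∫ x in a..b, f x = 0) :
    ∫ x in a..b, ‖f x‖ ^ 2 ≤ ((b - a) / (2 * π)) ^ 2 * ∫ x in a..b, ‖f' x‖ ^ 2 := by
  have hf'_int : IntervalIntegrable f' volume a b :=
    (intervalIntegrable_iff_integrableOn_Ioc_of_le hab.le).mpr (hf'.integrable one_le_two)
  have hf_cont : ContinuousOn f (Icc a b) := fun x hx ↦ (hf x hx).continuousAt.continuousWithinAt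
  have hf_L2 : MemLp f 2 (volume.restrict (Ioc a b)) :=
    (hf_cont.memLp_restrict isCompact_Icc 2).mono_measure
      (Measure.restrict_mono Ioc_subset_Icc_self le_rfl)
  have hf0 : fourierCoeffOn hab f 0 = 0 := by rw [fourierCoeffOn_zero, hmean, smul_zero]
  have hcoeff (n : ℤ) : ‖fourierCoeffOn hab f n‖ ^ 2 ≤
      ((b - a) / (2 * π)) ^ 2 * ‖fourierCoeffOn hab f' n‖ ^ 2 := by
    rw [← mul_pow]
    gcongr
    exact norm_fourierCoeffOn_of_hasDerivAt_of_eq_le hab hf hf'_int hfab hf0 n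
  have key := hasSum_le hcoeff (hasSum_sq_fourierCoeffOn hab hf_L2)
    ((hasSum_sq_fourierCoeffOn hab hf').mul_left _)
  rwa [smul_eq_mul, smul_eq_mul, mul_left_comm,
    mul_le_mul_iff_right₀ (inv_pos.mpr (sub_pos.mpr hab))] at key

theorem integral_sq_le_of_hasDerivAt_of_eq {a b : ℝ} (hab : a < b) {f f' : ℝ → ℝ}
    (hf : ∀ x ∈ Icc a b, HasDerivAt f (f' x) x) (hf' : MemLp f' 2 (volume.restrict (Ioc a b)))
    (hfab : f a = f b) (hmean : ∫ x in a..b, f x = 0) :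
    ∫ x in a..b, f x ^ 2 ≤ ((b - a) / (2 * π)) ^ 2 * ∫ x in a..b, f' x ^ 2 := by
  have := integral_norm_sq_le_of_hasDerivAt_of_eq hab (f := fun x ↦ (f x : ℂ))
    (fun x hx ↦ (hf x hx).ofReal_comp) hf'.ofReal (by rw [hfab])
    (by rw [intervalIntegral.integral_ofReal, hmean, ofReal_zero])
  simpa only [norm_real, Real.norm_eq_abs, sq_abs] using this

theorem wirtinger_inequality_periodic
    (f : ℝ → ℝ) (hf : ContDiff ℝ 1 f) (hper : Function.Periodic f 1)
    (hmean : ∫ x in (0:ℝ)..1, f x = 0) :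
    ∫ x in (0:ℝ)..1, (f x) ^ 2 ≤
      (1 / (4 * Real.pi ^ 2)) * ∫ x in (0:ℝ)..1, (deriv f x) ^ 2 := by
  have hd (x : ℝ) : HasDerivAt f (deriv f x) x := (hf.differentiable one_ne_zero x).hasDerivAt
  have hd_L2 : MemLp (deriv f) 2 (volume.restrict (Ioc 0 1)) :=
    ((hf.continuous_deriv le_rfl).continuousOn.memLp_restrict isCompact_Icc 2).mono_measure
      (Measure.restrict_mono Ioc_subset_Icc_self le_rfl)
  have hf01 : f 0 = f 1 := by simpa using (hper 0).symm
  convert integral_sq_le_of_hasDerivAt_of_eq zero_lt_one (fun x _ ↦ hd x) hd_L2 hf01 hmean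
    using 2
  field_simp
  ring
end

section
/- Suppose V : [0,T) → ℝ is C¹, c₁, c₂ > 0, and V'(t) ≤ -c₁ |V(t)|^{4/3} - c₂ for all t ∈ [0,T). Then T ≤ (1+|V(0)|)/c₂ + 3/c₁. -/
/-!
Since `V' ≤ -c₂`, by time `t₀ = (1 + |V 0|) / c₂` the function `W = -V` has reached `1`. From then
on `W' ≥ c₁ W^{4/3}`, so `W^{-1/3}` decreases at rate at least `c₁ / 3`; being positive and at most
`1` at `t₀`, it cannot survive for a time `3 / c₁` beyond `t₀`.
-/

open Set

theorem mul_sub_le_sub_of_hasDerivAt_ge {f f' : ℝ → ℝ} {a b C : ℝ} (hab : a ≤ b)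
    (hf : ∀ x ∈ Icc a b, HasDerivAt f (f' x) x) (hC : ∀ x ∈ Icc a b, C ≤ f' x) :
    C * (b - a) ≤ f b - f a := by
  refine (convex_Icc a b).mul_sub_le_image_sub_of_le_deriv
    (fun x hx => (hf x hx).continuousAt.continuousWithinAt)
    (fun x hx => (hf x (interior_subset hx)).differentiableAt.differentiableWithinAt)
    (fun x hx => ?_) a (left_mem_Icc.2 hab) b (right_mem_Icc.2 hab) hab
  rw [(hf x (interior_subset hx)).deriv]
  exact hC x (interior_subset hx)

theorem mul_sub_lt_rpow_one_sub_of_mul_abs_rpow_le_deriv {u u' : ℝ → ℝ} {a b c p : ℝ}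
    (hp : 1 < p) (hc : 0 ≤ c) (hab : a ≤ b) (hua : 0 < u a)
    (hu : ∀ x ∈ Icc a b, HasDerivAt u (u' x) x) (hu' : ∀ x ∈ Icc a b, c * |u x| ^ p ≤ u' x) :
    (p - 1) * c * (b - a) < u a ^ (1 - p) := by
  have hpos : ∀ x ∈ Icc a b, 0 < u x := fun x hx => by
    have := mul_sub_le_sub_of_hasDerivAt_ge hx.1
      (fun y hy => hu y ⟨hy.1, hy.2.trans hx.2⟩)
      (fun y hy => (mul_nonneg hc (by positivity)).trans (hu' y ⟨hy.1, hy.2.trans hx.2⟩))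
    linarith
  have hderiv : ∀ x ∈ Icc a b,
      HasDerivAt (fun y => -u y ^ (1 - p)) (-(u' x * (1 - p) * u x ^ (1 - p - 1))) x :=
    fun x hx => ((hu x hx).rpow_const (Or.inl (hpos x hx).ne')).neg
  have hrate : ∀ x ∈ Icc a b, (p - 1) * c ≤ -(u' x * (1 - p) * u x ^ (1 - p - 1)) := by
    intro x hx
    have hux := hpos x hx
    have hcancel : u x ^ (1 - p - 1) * u x ^ p = 1 := by
      rw [← Real.rpow_add hux]; simp
    have hle := hu' x hx
    rw [abs_of_pos hux] at hle
    calc (p - 1) * c = (p - 1) * u x ^ (1 - p - 1) * (c * u x ^ p) := by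
          rw [mul_assoc (p - 1), mul_left_comm _ c, hcancel, mul_one]
      _ ≤ (p - 1) * u x ^ (1 - p - 1) * u' x := by gcongr
      _ = -(u' x * (1 - p) * u x ^ (1 - p - 1)) := by ring
  have hub : 0 < u b ^ (1 - p) := Real.rpow_pos_of_pos (hpos b (right_mem_Icc.2 hab)) _
  linarith [mul_sub_le_sub_of_hasDerivAt_ge hab hderiv hrate]

theorem blowup_time_bound_of_riccati_type_general
    (T c₁ c₂ : ℝ) (hc₁ : 0 < c₁) (hc₂ : 0 < c₂)
    (V V' : ℝ → ℝ)
    (hderiv : ∀ t ∈ Set.Ico (0:ℝ) T, HasDerivAt V (V' t) t)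
    (hineq : ∀ t ∈ Set.Ico (0:ℝ) T, V' t ≤ -c₁ * |V t| ^ ((4:ℝ)/3) - c₂) :
    T ≤ (1 + |V 0|) / c₂ + 3 / c₁ := by
  by_contra! hT
  set t₀ := (1 + |V 0|) / c₂
  have ht₀ : 0 ≤ t₀ := by positivity
  have h3c₁ : 0 < 3 / c₁ := by positivity
  have hsub : ∀ {a b}, 0 ≤ a → b ≤ t₀ + 3 / c₁ → Icc a b ⊆ Ico 0 T :=
    fun ha hb => Icc_subset_Ico ha (hb.trans_lt hT)
  have hW : ∀ t ∈ Ico 0 T, HasDerivAt (fun s => -V s) (-V' t) t :=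
    fun t ht => (hderiv t ht).neg
  have hW' : ∀ t ∈ Ico 0 T, c₁ * |-V t| ^ ((4:ℝ)/3) + c₂ ≤ -V' t := fun t ht => by
    rw [abs_neg]; linarith [hineq t ht]
  have hWt₀ : 1 ≤ -V t₀ := by
    have := mul_sub_le_sub_of_hasDerivAt_ge ht₀ (fun t ht => hW t (hsub le_rfl (by linarith) ht))
      (fun t ht => (le_add_of_nonneg_left (by positivity)).trans
        (hW' t (hsub le_rfl (by linarith) ht)))
    rw [sub_zero, mul_div_cancel₀ _ hc₂.ne'] at this
    linarith [le_abs_self (V 0)]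
  have hlife := mul_sub_lt_rpow_one_sub_of_mul_abs_rpow_le_deriv (by norm_num) hc₁.le
    (le_add_of_nonneg_right h3c₁.le) (by linarith)
    (fun t ht => hW t (hsub ht₀ le_rfl ht))
    (fun t ht => (le_add_of_nonneg_right hc₂.le).trans (hW' t (hsub ht₀ le_rfl ht)))
  have hpow : (-V t₀) ^ (1 - (4:ℝ)/3) ≤ 1 := Real.rpow_le_one_of_one_le_of_nonpos hWt₀ (by norm_num)
  have hone : ((4:ℝ)/3 - 1) * c₁ * (t₀ + 3 / c₁ - t₀) = 1 := by field_simp; ring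
  linarith

theorem blowup_time_bound_of_riccati_type
    (T c₁ c₂ : ℝ) (hT : 0 < T) (hc₁ : 0 < c₁) (hc₂ : 0 < c₂)
    (V V' : ℝ → ℝ)
    (hderiv : ∀ t ∈ Set.Ico (0:ℝ) T, HasDerivAt V (V' t) t)
    (hcont : ContinuousOn V' (Set.Ico (0:ℝ) T))
    (hineq : ∀ t ∈ Set.Ico (0:ℝ) T, V' t ≤ -c₁ * |V t| ^ ((4:ℝ)/3) - c₂) :
    T ≤ (1 + |V 0|) / c₂ + 3 / c₁ :=
  blowup_time_bound_of_riccati_type_general T c₁ c₂ hc₁ hc₂ V V' hderiv hineq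
end

section
/- Suppose w : [0,T) → ℝ is C¹, K ≥ 0, w satisfies w'(t) ≤ -½ w(t)² + ½ K² on [0,T), and w(0) < -K. Then T is finite; in fact, setting δ = ½ - ½ √(K/(-w(0))), one has T ≤ -1/(δ w(0)). -/
/-!
Since `w' < 0` wherever `w = w 0 < -K`, the solution never climbs back to its initial level,
so `w ≤ w 0 < 0` on `[0, T)`. With `s = √(K / -w 0) < 1` we have `K = s² (-w 0)`, hence
`K² = s⁴ (w 0)² ≤ s (w 0)² ≤ s w²`, and `δ = ½ - ½ s` is exactly what makes this give `w' ≤ -δ w²`.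
Then `-1/w + δ t` is nonincreasing while `-1/w > 0`, which forces `δ t < -1 / w 0` on `[0, T)`.
-/

open Set

section Comparison

variable {w w' : ℝ → ℝ} {a b : ℝ}

theorem le_apply_left_of_deriv_neg_on_level (hderiv : ∀ t ∈ Ico a b, HasDerivAt w (w' t) t)
    (hlevel : ∀ t ∈ Ico a b, w t = w a → w' t < 0) : ∀ t ∈ Ico a b, w t ≤ w a := by
  intro t ht
  have hsub : Icc a t ⊆ Ico a b := Icc_subset_Ico_right ht.2
  exact image_le_of_deriv_right_lt_deriv_boundary (B := fun _ ↦ w a) (B' := 0)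
    (fun x hx ↦ (hderiv x (hsub hx)).continuousAt.continuousWithinAt)
    (fun x hx ↦ (hderiv x (hsub (Ico_subset_Icc_self hx))).hasDerivWithinAt) le_rfl
    (fun _ ↦ hasDerivAt_const _ _) (fun x hx ↦ hlevel x (hsub (Ico_subset_Icc_self hx)))
    ⟨ht.1, le_rfl⟩

theorem mul_sub_lt_neg_inv_of_deriv_le_neg_mul_sq {δ : ℝ}
    (hderiv : ∀ t ∈ Ico a b, HasDerivAt w (w' t) t) (hneg : ∀ t ∈ Ico a b, w t < 0)
    (hric : ∀ t ∈ Ico a b, w' t ≤ -δ * w t ^ 2) :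
    ∀ t ∈ Ico a b, δ * (t - a) < -(w a)⁻¹ := by
  have hg : ∀ t ∈ Ico a b,
      HasDerivAt (fun s ↦ -(w s)⁻¹ + δ * s) (w' t / w t ^ 2 + δ) t := fun t ht ↦
    (((hderiv t ht).inv (hneg t ht).ne).neg.add ((hasDerivAt_id' t).const_mul δ)).congr_deriv
      (by ring)
  have hanti : AntitoneOn (fun s ↦ -(w s)⁻¹ + δ * s) (Ico a b) := by
    refine antitoneOn_of_hasDerivWithinAt_nonpos (convex_Ico a b)
      (fun t ht ↦ (hg t ht).continuousAt.continuousWithinAt)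
      (fun t ht ↦ (hg t (interior_subset ht)).hasDerivWithinAt) fun t ht ↦ ?_
    have ht' := interior_subset ht
    have hsq : 0 < w t ^ 2 := by nlinarith [hneg t ht']
    have : w' t / w t ^ 2 ≤ -δ := by rw [div_le_iff₀ hsq]; linarith [hric t ht']
    linarith
  intro t ht
  have hdecr := hanti (left_mem_Ico.2 (ht.1.trans_lt ht.2)) ht ht.1
  have hpos : 0 < -(w t)⁻¹ := neg_pos.2 (inv_lt_zero.2 (hneg t ht))
  simp only at hdecr
  linarith

end Comparison

theorem sq_le_sqrt_div_mul_sq {K a : ℝ} (hK : 0 ≤ K) (hKa : K ≤ a) :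
    K ^ 2 ≤ √(K / a) * a ^ 2 := by
  rcases hK.eq_or_lt with rfl | hKpos
  · simp
  have ha : 0 < a := hKpos.trans_le hKa
  set s := √(K / a)
  have hs0 : 0 ≤ s := Real.sqrt_nonneg _
  have hs1 : s ≤ 1 := Real.sqrt_le_one.2 ((div_le_one ha).2 hKa)
  have hK_eq : K = s ^ 2 * a := by rw [Real.sq_sqrt (by positivity)]; field_simp
  have hs4 : s ^ 4 ≤ s := by nlinarith [pow_le_one₀ hs0 hs1 (n := 3)]
  calc K ^ 2 = s ^ 4 * a ^ 2 := by rw [hK_eq]; ring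
    _ ≤ s * a ^ 2 := by gcongr

theorem blowup_time_bound_of_quadratic_riccati_general
    (T K : ℝ) (hK : 0 ≤ K)
    (w w' : ℝ → ℝ)
    (hderiv : ∀ t ∈ Set.Ico (0:ℝ) T, HasDerivAt w (w' t) t)
    (hineq : ∀ t ∈ Set.Ico (0:ℝ) T, w' t ≤ -(1/2) * (w t) ^ 2 + (1/2) * K ^ 2)
    (h0 : w 0 < -K) :
    T ≤ -1 / ((1/2 - (1/2) * Real.sqrt (K / (-(w 0)))) * w 0) := by
  have hw0 : w 0 < 0 := by linarith
  set s := √(K / -w 0)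
  set δ := 1/2 - 1/2 * s with hδ
  have hs0 : 0 ≤ s := Real.sqrt_nonneg _
  have hs1 : s < 1 := (Real.sqrt_lt' one_pos).2 (by rw [one_pow, div_lt_one (by linarith)]; linarith)
  have hδpos : 0 < δ := by linarith
  have hKs : K ^ 2 ≤ s * w 0 ^ 2 := by
    simpa only [neg_sq] using sq_le_sqrt_div_mul_sq (a := -w 0) hK (by linarith)
  have htrap := le_apply_left_of_deriv_neg_on_level hderiv fun t ht hwt ↦ by
    nlinarith [hineq t ht]
  have hric : ∀ t ∈ Ico 0 T, w' t ≤ -δ * w t ^ 2 := fun t ht ↦ by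
    have hsq : w 0 ^ 2 ≤ w t ^ 2 := by nlinarith [htrap t ht]
    nlinarith [hineq t ht, mul_le_mul_of_nonneg_left hsq hs0]
  have hbound := mul_sub_lt_neg_inv_of_deriv_le_neg_mul_sq hderiv
    (fun t ht ↦ (htrap t ht).trans_lt hw0) hric
  by_contra! hTc
  have hc : 0 ≤ -1 / (δ * w 0) :=
    div_nonneg_of_nonpos (by norm_num) (mul_neg_of_pos_of_neg hδpos hw0).le
  have hδc : δ * (-1 / (δ * w 0) - 0) = -(w 0)⁻¹ := by
    rw [sub_zero]
    field_simp
  linarith [hbound _ ⟨hc, hTc⟩]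

theorem blowup_time_bound_of_quadratic_riccati
    (T K : ℝ) (hT : 0 < T) (hK : 0 ≤ K)
    (w w' : ℝ → ℝ)
    (hderiv : ∀ t ∈ Set.Ico (0:ℝ) T, HasDerivAt w (w' t) t)
    (hcont : ContinuousOn w' (Set.Ico (0:ℝ) T))
    (hineq : ∀ t ∈ Set.Ico (0:ℝ) T, w' t ≤ -(1/2) * (w t) ^ 2 + (1/2) * K ^ 2)
    (h0 : w 0 < -K) :
    T ≤ -1 / ((1/2 - (1/2) * Real.sqrt (K / (-(w 0)))) * w 0) :=
  blowup_time_bound_of_quadratic_riccati_general T K hK w w' hderiv hineq h0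
end

section
/- Let w : [0,T) → ℝ be C¹ with T < ∞, satisfying the blow-up rate bounds: there exists N > 0 with -½ w² - N ≤ w'(t) ≤ -½ w² + N on [0,T), and lim_{t→T⁻} w(t) = -∞. Then lim_{t→T⁻} w(t)(T - t) = -2. -/
/-!
The reciprocal `v = 1 / w` tends to `0` and, by the two-sided bound, `v' = -w' / w²` tends to
`1 / 2`. L'Hôpital's rule then gives `v t / (T - t) → -1 / 2`, and `w t * (T - t)` is the
reciprocal of that quotient.
-/

open Set Filter Topology

theorem tendsto_div_sub_of_tendsto_deriv {f f' : ℝ → ℝ} {b L : ℝ}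
    (hf : ∀ᶠ t in 𝓝[<] b, HasDerivAt f (f' t) t) (hf0 : Tendsto f (𝓝[<] b) (𝓝 0))
    (hf' : Tendsto f' (𝓝[<] b) (𝓝 L)) :
    Tendsto (fun t => f t / (b - t)) (𝓝[<] b) (𝓝 (-L)) := by
  have hg : ∀ t, HasDerivAt (fun s => b - s) (-1) t := fun t => by
    simpa using (hasDerivAt_id t).const_sub b
  have hg0 : Tendsto (fun s => b - s) (𝓝[<] b) (𝓝 0) := by
    simpa using ((continuous_sub_left b).tendsto b).mono_left nhdsWithin_le_nhds
  refine HasDerivAt.lhopital_zero_nhdsLT hf (Eventually.of_forall hg)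
    (Eventually.of_forall fun _ => by norm_num) hf0 hg0 ?_
  simpa only [div_neg, div_one] using hf'.neg

theorem tendsto_neg_div_sq_of_abs_add_half_sq_le {α : Type*} {l : Filter α} {w w' : α → ℝ}
    {N : ℝ} (hw : Tendsto w l atBot) (hbound : ∀ᶠ t in l, |w' t + w t ^ 2 / 2| ≤ N) :
    Tendsto (fun t => -w' t / w t ^ 2) l (𝓝 (1 / 2)) := by
  have hsq : Tendsto (fun t => w t ^ 2) l atTop := by
    simpa only [sq] using hw.atBot_mul_atBot₀ hw
  have herr : Tendsto (fun t => (w' t + w t ^ 2 / 2) / w t ^ 2) l (𝓝 0) := by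
    refine squeeze_zero_norm' ?_ ((tendsto_const_nhds (x := N)).div_atTop hsq)
    filter_upwards [hbound, hsq.eventually_gt_atTop 0] with t ht hpos
    rw [norm_div, Real.norm_eq_abs, Real.norm_of_nonneg hpos.le]
    exact div_le_div_of_nonneg_right ht hpos.le
  have hlim := herr.const_sub (1 / 2)
  rw [sub_zero] at hlim
  refine hlim.congr' ?_
  filter_upwards [hw.eventually_lt_atBot 0] with t hneg
  field_simp [hneg.ne]
  ring

theorem blowup_rate_muCH_general
    (T N : ℝ) (hT : 0 < T)
    (w w' : ℝ → ℝ)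
    (hderiv : ∀ t ∈ Set.Ico (0:ℝ) T, HasDerivAt w (w' t) t)
    (hlow : ∀ t ∈ Set.Ico (0:ℝ) T, -(1/2) * (w t) ^ 2 - N ≤ w' t)
    (hup : ∀ t ∈ Set.Ico (0:ℝ) T, w' t ≤ -(1/2) * (w t) ^ 2 + N)
    (hblow : Filter.Tendsto w (nhdsWithin T (Set.Iio T)) Filter.atBot) :
    Filter.Tendsto (fun t => w t * (T - t)) (nhdsWithin T (Set.Iio T))
      (nhds (-2)) := by
  have hinv : ∀ᶠ t in 𝓝[<] T, HasDerivAt (fun s => (w s)⁻¹) (-w' t / w t ^ 2) t := by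
    filter_upwards [Ico_mem_nhdsLT hT, hblow.eventually_lt_atBot 0] with t ht hwt
    exact (hderiv t ht).inv hwt.ne
  have hbound : ∀ᶠ t in 𝓝[<] T, |w' t + w t ^ 2 / 2| ≤ N := by
    filter_upwards [Ico_mem_nhdsLT hT] with t ht
    exact abs_le.2 ⟨by linarith [hlow t ht], by linarith [hup t ht]⟩
  have hrate : Tendsto (fun t => (w t)⁻¹ / (T - t)) (𝓝[<] T) (𝓝 (-(1 / 2))) :=
    tendsto_div_sub_of_tendsto_deriv hinv (tendsto_inv_atBot_zero.comp hblow)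
      (tendsto_neg_div_sq_of_abs_add_half_sq_le hblow hbound)
  convert hrate.inv₀ (by norm_num) using 2 with t
  · rw [inv_div, div_inv_eq_mul, mul_comm]
  · norm_num

theorem blowup_rate_muCH
    (T N : ℝ) (hT : 0 < T) (hN : 0 < N)
    (w w' : ℝ → ℝ)
    (hderiv : ∀ t ∈ Set.Ico (0:ℝ) T, HasDerivAt w (w' t) t)
    (hcont : ContinuousOn w' (Set.Ico (0:ℝ) T))
    (hlow : ∀ t ∈ Set.Ico (0:ℝ) T, -(1/2) * (w t) ^ 2 - N ≤ w' t)
    (hup : ∀ t ∈ Set.Ico (0:ℝ) T, w' t ≤ -(1/2) * (w t) ^ 2 + N)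
    (hblow : Filter.Tendsto w (nhdsWithin T (Set.Iio T)) Filter.atBot) :
    Filter.Tendsto (fun t => w t * (T - t)) (nhdsWithin T (Set.Iio T))
      (nhds (-2)) :=
  blowup_rate_muCH_general T N hT w w' hderiv hlow hup hblow
end

section
/- Let w : [0,T) → ℝ be C¹ with T < ∞, N > 0, satisfying -w² - N ≤ w'(t) ≤ -w² + N on [0,T) and lim_{t→T⁻} w(t) = -∞. Then lim_{t→T⁻} w(t)(T - t) = -1. -/
/-! Dividing the differential inequality by `w ^ 2` gives `w' / w ^ 2 = -1 + O(w⁻²) → -1`, so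
`v = w⁻¹` satisfies `v' = -w' / w ^ 2 → 1` and `v → 0` at `T`. L'Hôpital's rule applied to
`(T - t) / v t = w t * (T - t)` then gives the limit `-1 / 1`. -/

open Filter Set Topology

theorem tendsto_div_sq_of_abs_add_sq_le {α : Type*} {l : Filter α} {w w' : α → ℝ} {N : ℝ}
    (hw : Tendsto (fun x => w x ^ 2) l atTop) (hN : ∀ᶠ x in l, |w' x + w x ^ 2| ≤ N) :
    Tendsto (fun x => w' x / w x ^ 2) l (𝓝 (-1)) := by
  have hsmall : Tendsto (fun x => N / w x ^ 2) l (𝓝 0) := tendsto_const_nhds.div_atTop hw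
  have herr : Tendsto (fun x => (w' x + w x ^ 2) / w x ^ 2) l (𝓝 0) := by
    refine squeeze_zero_norm' ?_ hsmall
    filter_upwards [hN, hw.eventually_gt_atTop 0] with x hx hpos
    rw [norm_div, Real.norm_eq_abs, Real.norm_eq_abs, abs_of_pos hpos]
    gcongr
  rw [show (-1 : ℝ) = 0 - 1 by norm_num]
  refine (herr.sub_const 1).congr' ?_
  filter_upwards [hw.eventually_gt_atTop 0] with x hpos
  rw [add_div, div_self hpos.ne', add_sub_cancel_right]

theorem tendsto_mul_sub_of_tendsto_deriv_div_sq {w w' : ℝ → ℝ} {b c : ℝ} (hc : c ≠ 0)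
    (hderiv : ∀ᶠ t in 𝓝[<] b, HasDerivAt w (w' t) t)
    (hinv : Tendsto (fun t => (w t)⁻¹) (𝓝[<] b) (𝓝 0))
    (hratio : Tendsto (fun t => w' t / w t ^ 2) (𝓝[<] b) (𝓝 c)) :
    Tendsto (fun t => w t * (b - t)) (𝓝[<] b) (𝓝 c⁻¹) := by
  have hne : ∀ᶠ t in 𝓝[<] b, w' t / w t ^ 2 ≠ 0 := hratio.eventually_ne hc
  have hw_ne : ∀ᶠ t in 𝓝[<] b, w t ≠ 0 := by
    filter_upwards [hne] with t ht hw
    simp [hw] at ht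
  have hgap : Tendsto (fun t => b - t) (𝓝[<] b) (𝓝 0) := by
    have h := ((continuous_sub_left b).tendsto b).mono_left (nhdsWithin_le_nhds (s := Iio b))
    rwa [sub_self] at h
  have key := HasDerivAt.lhopital_zero_nhdsLT (f := fun t => b - t) (f' := fun _ => -1)
    (g := fun t => (w t)⁻¹) (g' := fun t => -w' t / w t ^ 2)
    (Eventually.of_forall fun t => by simpa using (hasDerivAt_id t).const_sub b)
    (by filter_upwards [hderiv, hw_ne] with t hd hwt using hd.inv hwt)
    (by filter_upwards [hne] with t ht; rwa [neg_div, neg_ne_zero])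
    hgap hinv (by simpa [neg_div] using hratio.inv₀ hc)
  simpa [div_inv_eq_mul, mul_comm] using key

theorem blowup_rate_muDP_general
    (T N : ℝ) (hT : 0 < T)
    (w w' : ℝ → ℝ)
    (hderiv : ∀ t ∈ Set.Ico (0:ℝ) T, HasDerivAt w (w' t) t)
    (hlow : ∀ t ∈ Set.Ico (0:ℝ) T, -(w t) ^ 2 - N ≤ w' t)
    (hup : ∀ t ∈ Set.Ico (0:ℝ) T, w' t ≤ -(w t) ^ 2 + N)
    (hblow : Filter.Tendsto w (nhdsWithin T (Set.Iio T)) Filter.atBot) :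
    Filter.Tendsto (fun t => w t * (T - t)) (nhdsWithin T (Set.Iio T))
      (nhds (-1)) := by
  have hnear : ∀ᶠ t in 𝓝[<] T, t ∈ Ico 0 T :=
    mem_of_superset (Ioo_mem_nhdsLT hT) Ioo_subset_Ico_self
  have hsq : Tendsto (fun t => w t ^ 2) (𝓝[<] T) atTop := by
    simpa [sq] using hblow.atBot_mul_atBot₀ hblow
  have hratio : Tendsto (fun t => w' t / w t ^ 2) (𝓝[<] T) (𝓝 (-1)) := by
    refine tendsto_div_sq_of_abs_add_sq_le (N := N) hsq ?_
    filter_upwards [hnear] with t ht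
    rw [abs_le]
    constructor <;> linarith [hlow t ht, hup t ht]
  simpa using tendsto_mul_sub_of_tendsto_deriv_div_sq (by norm_num) (hnear.mono hderiv)
    hblow.inv_tendsto_atBot hratio

theorem blowup_rate_muDP
    (T N : ℝ) (hT : 0 < T) (hN : 0 < N)
    (w w' : ℝ → ℝ)
    (hderiv : ∀ t ∈ Set.Ico (0:ℝ) T, HasDerivAt w (w' t) t)
    (hcont : ContinuousOn w' (Set.Ico (0:ℝ) T))
    (hlow : ∀ t ∈ Set.Ico (0:ℝ) T, -(w t) ^ 2 - N ≤ w' t)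
    (hup : ∀ t ∈ Set.Ico (0:ℝ) T, w' t ≤ -(w t) ^ 2 + N)
    (hblow : Filter.Tendsto w (nhdsWithin T (Set.Iio T)) Filter.atBot) :
    Filter.Tendsto (fun t => w t * (T - t)) (nhdsWithin T (Set.Iio T))
      (nhds (-1)) :=
  blowup_rate_muDP_general T N hT w w' hderiv hlow hup hblow
end

section
/- Let u be a smooth 1-periodic (in x) solution on [0,T) of the μCH equation u_{tx} = -½ u_x² - u u_{xx} + 2μ₀ u - 2μ₀² - ½ μ₁², where μ₀ = ∫₀¹ u dx and μ₁² = ∫₀¹ u_x² dx are constant in time. Then d/dt ∫₀¹ u_x³ dx = -½ ∫₀¹ u_x⁴ dx - (3/2) μ₁⁴ + 6μ₀ ∫₀¹ (u - μ₀) u_x² dx for all t ∈ [0,T). -/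
theorem muCH_cubic_energy_evolution
    (T μ₀ μ₁ : ℝ) (hT : 0 < T)
    (u : ℝ → ℝ → ℝ)
    (hu : ContDiff ℝ (⊤ : ℕ∞) (Function.uncurry u))
    (hper : ∀ t x, u t (x + 1) = u t x)
    (hμ₀ : ∀ t ∈ Set.Ico (0:ℝ) T, ∫ x in (0:ℝ)..1, u t x = μ₀)
    (hμ₁ : ∀ t ∈ Set.Ico (0:ℝ) T, ∫ x in (0:ℝ)..1, (deriv (u t) x) ^ 2 = μ₁ ^ 2)
    (hpde : ∀ t ∈ Set.Ico (0:ℝ) T, ∀ x : ℝ,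
      deriv (fun s => deriv (u s) x) t =
        -(1/2) * (deriv (u t) x) ^ 2 - u t x * deriv (deriv (u t)) x
          + 2 * μ₀ * u t x - 2 * μ₀ ^ 2 - (1/2) * μ₁ ^ 2) :
    ∀ t ∈ Set.Ico (0:ℝ) T,
      HasDerivAt (fun s => ∫ x in (0:ℝ)..1, (deriv (u s) x) ^ 3)
        (-(1/2) * (∫ x in (0:ℝ)..1, (deriv (u t) x) ^ 4) - (3/2) * μ₁ ^ 4
          + 6 * μ₀ * ∫ x in (0:ℝ)..1, (u t x - μ₀) * (deriv (u t) x) ^ 2) t := by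
  intro t ht
  have hUd : Differentiable ℝ (Function.uncurry u) := hu.differentiable (by simp)
  set W : ℝ × ℝ → ℝ := fun p => fderiv ℝ (Function.uncurry u) p (0, 1) with hWdef
  have hW : ContDiff ℝ (⊤ : ℕ∞) W := (hu.fderiv_right (by simp)).clm_apply contDiff_const
  have hWd : Differentiable ℝ W := hW.differentiable (by simp)
  set Z : ℝ × ℝ → ℝ := fun p => fderiv ℝ W p (1, 0) with hZdef
  set X : ℝ × ℝ → ℝ := fun p => fderiv ℝ W p (0, 1) with hXdef
  have hdW : ContDiff ℝ (⊤ : ℕ∞) (fderiv ℝ W) := hW.fderiv_right (by simp)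
  have hZc : Continuous Z := by
    have h : ContDiff ℝ (⊤ : ℕ∞) Z := hdW.clm_apply contDiff_const
    exact h.continuous
  have hXc : Continuous X := by
    have h : ContDiff ℝ (⊤ : ℕ∞) X := hdW.clm_apply contDiff_const
    exact h.continuous
  -- value of ∂ₓ u
  have hvd : ∀ s x, HasDerivAt (u s) (W (s, x)) x := by
    intro s x
    have h2 : HasDerivAt (fun y : ℝ => ((s, y) : ℝ × ℝ)) ((0 : ℝ), (1 : ℝ)) x :=
      (hasDerivAt_const x s).prodMk (hasDerivAt_id x)
    exact (hUd (s, x)).hasFDerivAt.comp_hasDerivAt x h2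
  have hveq : ∀ s x, deriv (u s) x = W (s, x) := fun s x => (hvd s x).deriv
  -- time derivative of W
  have hZd : ∀ s x, HasDerivAt (fun s' => W (s', x)) (Z (s, x)) s := by
    intro s x
    have h2 : HasDerivAt (fun s' : ℝ => ((s', x) : ℝ × ℝ)) ((1 : ℝ), (0 : ℝ)) s :=
      (hasDerivAt_id s).prodMk (hasDerivAt_const s x)
    exact (hWd (s, x)).hasFDerivAt.comp_hasDerivAt s h2
  -- space derivative of W
  have hXd : ∀ s x, HasDerivAt (fun y => W (s, y)) (X (s, x)) x := by
    intro s x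
    have h2 : HasDerivAt (fun y : ℝ => ((s, y) : ℝ × ℝ)) ((0 : ℝ), (1 : ℝ)) x :=
      (hasDerivAt_const x s).prodMk (hasDerivAt_id x)
    exact (hWd (s, x)).hasFDerivAt.comp_hasDerivAt x h2
  -- periodicity of W in x
  have hWper : ∀ s x, W (s, x + 1) = W (s, x) := by
    intro s x
    rw [← hveq, ← hveq]
    have heq : (fun y => u s (y + 1)) = u s := funext (hper s)
    rw [← deriv_comp_add_const, heq]
  -- continuity in x at fixed t
  have hcx : Continuous (fun x : ℝ => ((t, x) : ℝ × ℝ)) := continuous_const.prodMk continuous_id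
  have hcu : Continuous (u t) := hu.continuous.comp hcx
  have hcW : Continuous (fun x => W (t, x)) := hW.continuous.comp hcx
  have hcX : Continuous (fun x => X (t, x)) := hXc.comp hcx
  have hcZ : Continuous (fun x => Z (t, x)) := hZc.comp hcx
  -- Z value from the PDE
  have hZeq : ∀ x, Z (t, x) =
      -(1/2) * (W (t, x)) ^ 2 - u t x * X (t, x) + 2 * μ₀ * u t x - 2 * μ₀ ^ 2
        - (1/2) * μ₁ ^ 2 := by
    intro x
    have h1 : deriv (fun s => deriv (u s) x) t = Z (t, x) := by
      have he : (fun s => deriv (u s) x) = fun s => W (s, x) := funext fun s => hveq s x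
      rw [he]; exact (hZd t x).deriv
    have h2 : deriv (deriv (u t)) x = X (t, x) := by
      have he : deriv (u t) = fun y => W (t, y) := funext (hveq t)
      rw [he]; exact (hXd t x).deriv
    have h := hpde t ht x
    rw [h1, h2] at h
    simpa only [hveq] using h
  -- differentiation under the integral sign
  have hFd : ∀ x s, HasDerivAt (fun s' => (W (s', x)) ^ 3) (3 * W (s, x) ^ 2 * Z (s, x)) s := by
    intro x s
    have h := (hZd s x).pow 3
    norm_num at h
    exact h
  have hF'c : Continuous (fun p : ℝ × ℝ => 3 * W p ^ 2 * Z p) :=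
    (continuous_const.mul (hW.continuous.pow 2)).mul hZc
  obtain ⟨C, hC⟩ :=
    ((isCompact_closedBall t 1).prod (isCompact_Icc (a := (0:ℝ)) (b := 1))).exists_bound_of_continuousOn
      hF'c.continuousOn
  have key := intervalIntegral.hasDerivAt_integral_of_dominated_loc_of_deriv_le
      (μ := MeasureTheory.volume) (a := (0:ℝ)) (b := 1)
      (F := fun s x => (W (s, x)) ^ 3) (F' := fun s x => 3 * W (s, x) ^ 2 * Z (s, x))
      (x₀ := t) (bound := fun _ => C) (s := Metric.ball t 1) (Metric.ball_mem_nhds t one_pos)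
      (Filter.Eventually.of_forall fun s =>
        ((hW.continuous.comp (continuous_const.prodMk continuous_id)).pow 3).aestronglyMeasurable)
      (((hcW.pow 3)).intervalIntegrable 0 1)
      ((continuous_const.mul (hcW.pow 2)).mul hcZ).aestronglyMeasurable
      (Filter.Eventually.of_forall fun x hx s hs => by
        have hx' : x ∈ Set.Icc (0:ℝ) 1 := by
          rw [Set.uIoc_of_le (by norm_num : (0:ℝ) ≤ 1)] at hx
          exact ⟨le_of_lt hx.1, hx.2⟩
        exact hC (s, x) ⟨Metric.ball_subset_closedBall hs, hx'⟩)
      (intervalIntegrable_const)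
      (Filter.Eventually.of_forall fun x _ s _ => hFd x s)
  have key2 : HasDerivAt (fun s => ∫ x in (0:ℝ)..1, (W (s, x)) ^ 3)
      (∫ x in (0:ℝ)..1, 3 * W (t, x) ^ 2 * Z (t, x)) t := key.2
  -- integration by parts term
  have hD : ∀ x : ℝ, HasDerivAt (fun y => u t y * W (t, y) ^ 3)
      (W (t, x) ^ 4 + 3 * u t x * W (t, x) ^ 2 * X (t, x)) x := by
    intro x
    have h := (hvd t x).mul ((hXd t x).pow 3)
    refine HasDerivAt.congr_deriv h ?_
    push_cast
    simp only [Pi.pow_apply]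
    ring
  have hIBP : (∫ x in (0:ℝ)..1, (W (t, x) ^ 4 + 3 * u t x * W (t, x) ^ 2 * X (t, x))) = 0 := by
    rw [intervalIntegral.integral_eq_sub_of_hasDerivAt (fun x _ => hD x)
      (((hcW.pow 4).add (((continuous_const.mul hcu).mul (hcW.pow 2)).mul hcX)).intervalIntegrable 0 1)]
    have h1 : u t 1 = u t 0 := by simpa using hper t 0
    have h2 : W (t, 1) = W (t, 0) := by simpa using hWper t 0
    rw [h1, h2]
    ring
  -- pointwise identity for the integrand
  have hpt : ∀ x : ℝ, 3 * W (t, x) ^ 2 * Z (t, x) =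
      -(1/2) * W (t, x) ^ 4 - (3/2) * μ₁ ^ 2 * W (t, x) ^ 2
        + 6 * μ₀ * ((u t x - μ₀) * W (t, x) ^ 2)
        - (W (t, x) ^ 4 + 3 * u t x * W (t, x) ^ 2 * X (t, x)) := by
    intro x
    rw [hZeq x]; ring
  -- integrability of the pieces
  have ia : IntervalIntegrable (fun x => -(1/2) * W (t, x) ^ 4) MeasureTheory.volume 0 1 :=
    (continuous_const.mul (hcW.pow 4)).intervalIntegrable 0 1
  have ib : IntervalIntegrable (fun x => (3/2) * μ₁ ^ 2 * W (t, x) ^ 2) MeasureTheory.volume 0 1 :=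
    (continuous_const.mul (hcW.pow 2)).intervalIntegrable 0 1
  have ic : IntervalIntegrable (fun x => 6 * μ₀ * ((u t x - μ₀) * W (t, x) ^ 2))
      MeasureTheory.volume 0 1 :=
    (continuous_const.mul ((hcu.sub continuous_const).mul (hcW.pow 2))).intervalIntegrable 0 1
  have id4 : IntervalIntegrable (fun x => W (t, x) ^ 4 + 3 * u t x * W (t, x) ^ 2 * X (t, x))
      MeasureTheory.volume 0 1 :=
    ((hcW.pow 4).add (((continuous_const.mul hcu).mul (hcW.pow 2)).mul hcX)).intervalIntegrable 0 1
  have hM : (∫ x in (0:ℝ)..1, W (t, x) ^ 2) = μ₁ ^ 2 := by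
    have h := hμ₁ t ht
    simpa only [hveq] using h
  -- assemble
  have hval : (∫ x in (0:ℝ)..1, 3 * W (t, x) ^ 2 * Z (t, x)) =
      -(1/2) * (∫ x in (0:ℝ)..1, (W (t, x)) ^ 4) - (3/2) * μ₁ ^ 4
        + 6 * μ₀ * ∫ x in (0:ℝ)..1, ((u t x - μ₀) * (W (t, x)) ^ 2) := by
    rw [intervalIntegral.integral_congr (g := fun x =>
      -(1/2) * W (t, x) ^ 4 - (3/2) * μ₁ ^ 2 * W (t, x) ^ 2
        + 6 * μ₀ * ((u t x - μ₀) * W (t, x) ^ 2)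
        - (W (t, x) ^ 4 + 3 * u t x * W (t, x) ^ 2 * X (t, x))) (fun x _ => hpt x)]
    rw [intervalIntegral.integral_sub ((ia.sub ib).add ic) id4,
      intervalIntegral.integral_add (ia.sub ib) ic,
      intervalIntegral.integral_sub ia ib,
      intervalIntegral.integral_const_mul, intervalIntegral.integral_const_mul,
      intervalIntegral.integral_const_mul, hIBP, hM]
    ring
  have hfun : (fun s => ∫ x in (0:ℝ)..1, (deriv (u s) x) ^ 3)
      = fun s => ∫ x in (0:ℝ)..1, (W (s, x)) ^ 3 := by
    funext s
    simp only [hveq]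
  rw [hfun]
  simp only [hveq]
  rw [← hval]
  exact key2
end

section
/- Suppose w : [0,T) → ℝ is C¹, satisfies w'(t) ≤ -½ w(t)² + N on [0,T) with N > 0, and there exists t₀ ∈ [0,T) with w(t₀) < -√(2N + N/ε) for some ε ∈ (0,½). Then w is strictly decreasing on [t₀,T) and w(t) < -√(N/ε) for all t ∈ [t₀,T). -/
theorem decreasing_after_threshold
    (T N ε t₀ : ℝ) (hT : 0 < T) (hN : 0 < N) (hε : ε ∈ Set.Ioo (0:ℝ) (1/2))
    (ht₀ : t₀ ∈ Set.Ico (0:ℝ) T)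
    (w w' : ℝ → ℝ)
    (hderiv : ∀ t ∈ Set.Ico (0:ℝ) T, HasDerivAt w (w' t) t)
    (hcont : ContinuousOn w' (Set.Ico (0:ℝ) T))
    (hineq : ∀ t ∈ Set.Ico (0:ℝ) T, w' t ≤ -(1/2) * (w t) ^ 2 + N)
    (h0 : w t₀ < -Real.sqrt (2 * N + N / ε)) :
    StrictAntiOn w (Set.Ico t₀ T) ∧
      ∀ t ∈ Set.Ico t₀ T, w t < -Real.sqrt (N / ε) := by
  obtain ⟨hε0, hε2⟩ := hε
  obtain ⟨ht₀0, ht₀T⟩ := ht₀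
  obtain ⟨c, hc⟩ : ∃ c : ℝ, c = -Real.sqrt (2 * N + N / ε) := ⟨_, rfl⟩
  rw [← hc] at h0
  have hNε : 0 < N / ε := div_pos hN hε0
  have hpos : (0:ℝ) ≤ 2 * N + N / ε := by positivity
  have hcsq : c ^ 2 = 2 * N + N / ε := by
    rw [hc, neg_pow]
    simp [Real.sq_sqrt hpos]
  have hc0 : c < 0 := by
    rw [hc, neg_neg_iff_pos]
    exact Real.sqrt_pos.mpr (by positivity)
  have hwc : ∀ t ∈ Set.Ico (0:ℝ) T, ContinuousAt w t := fun t ht =>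
    (hderiv t ht).continuousAt
  have hderivneg : ∀ t ∈ Set.Ico (0:ℝ) T, w t < c → w' t < 0 := by
    intro t ht hlt
    have h1 : c ^ 2 < (w t) ^ 2 := by nlinarith
    have h2 := hineq t ht
    nlinarith
  have key : ∀ t ∈ Set.Ico t₀ T, w t < c := by
    by_contra h
    push_neg at h
    obtain ⟨b, hb, hbw⟩ := h
    set B := {t | t ∈ Set.Ico t₀ T ∧ c ≤ w t} with hB
    have hBne : B.Nonempty := ⟨b, hb, hbw⟩
    have hBbdd : BddBelow B := ⟨t₀, fun x hx => hx.1.1⟩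
    set s := sInf B with hs
    have hst₀ : t₀ ≤ s := le_csInf hBne fun x hx => hx.1.1
    have hsb : s ≤ b := csInf_le hBbdd ⟨hb, hbw⟩
    have hsT : s < T := lt_of_le_of_lt hsb hb.2
    have hs0T : s ∈ Set.Ico (0:ℝ) T := ⟨le_trans ht₀0 hst₀, hsT⟩
    have hws : c ≤ w s := by
      have hmem : s ∈ closure B := csInf_mem_closure hBne hBbdd
      obtain ⟨u, hu, hulim⟩ := mem_closure_iff_seq_limit.1 hmem
      have hwu : Filter.Tendsto (fun n => w (u n)) Filter.atTop (nhds (w s)) :=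
        ((hwc s hs0T).tendsto.comp hulim)
      exact ge_of_tendsto hwu (Filter.Eventually.of_forall fun n => (hu n).2)
    have hlt : ∀ t ∈ Set.Ico t₀ s, w t < c := by
      intro t ht
      by_contra hge
      push_neg at hge
      have : s ≤ t := csInf_le hBbdd ⟨⟨ht.1, lt_trans ht.2 hsT⟩, hge⟩
      exact absurd ht.2 (not_lt.mpr this)
    have ht₀s : t₀ < s := by
      rcases lt_or_eq_of_le hst₀ with h | h
      · exact h
      · exfalso; rw [← h] at hws; linarith
    have hsub : Set.Icc t₀ s ⊆ Set.Ico (0:ℝ) T := fun x hx =>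
      ⟨le_trans ht₀0 hx.1, lt_of_le_of_lt hx.2 hsT⟩
    have hanti : StrictAntiOn w (Set.Icc t₀ s) := by
      apply strictAntiOn_of_deriv_neg (convex_Icc t₀ s)
      · exact fun x hx => (hwc x (hsub hx)).continuousWithinAt
      · intro x hx
        rw [interior_Icc] at hx
        have hx' : x ∈ Set.Ico (0:ℝ) T := hsub ⟨le_of_lt hx.1, le_of_lt hx.2⟩
        rw [(hderiv x hx').deriv]
        exact hderivneg x hx' (hlt x ⟨le_of_lt hx.1, hx.2⟩)
    have : w s < w t₀ :=
      hanti ⟨le_refl _, le_of_lt ht₀s⟩ ⟨le_of_lt ht₀s, le_refl _⟩ ht₀s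
    linarith
  have hsub : Set.Ico t₀ T ⊆ Set.Ico (0:ℝ) T := fun x hx =>
    ⟨le_trans ht₀0 hx.1, hx.2⟩
  constructor
  · apply strictAntiOn_of_deriv_neg (convex_Ico t₀ T)
    · exact fun x hx => (hwc x (hsub hx)).continuousWithinAt
    · intro x hx
      rw [interior_Ico] at hx
      have hx' : x ∈ Set.Ico t₀ T := ⟨le_of_lt hx.1, hx.2⟩
      rw [(hderiv x (hsub hx')).deriv]
      exact hderivneg x (hsub hx') (key x hx')
  · intro t ht
    have h1 := key t ht
    have h2 : Real.sqrt (N / ε) ≤ Real.sqrt (2 * N + N / ε) :=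
      Real.sqrt_le_sqrt (by linarith)
    rw [hc] at h1
    linarith
end
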